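/- arXiv:1312.1530 — 3 statements merged into one kernel-verified Lean document; each statement's English description precedes it below -/
import Mathlib

section
/- Let A, B, C be positive reals. The symmetric 3×3 matrix M with diagonal entries M₁₁ = 4ABC/((A+B)(A+C)(A+B+C)), M₂₂ = 4ABC/((A+B)(B+C)(A+B+C)), M₃₃ = 4ABC/((A+C)(B+C)(A+B+C)), and off-diagonal entries M₁₂ = M₂₁ = −4ABC²/((A+B)(A+C)(B+C)(A+B+C)), M₁₃ = M₃₁ = −4AB²C/((A+B)(A+C)(B+C)(A+B+C)), M₂₃ = M₃₂ = −4A²BC/((A+B)(A+C)(B+C)(A+B+C)), is positive semidefinite. -/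
/-!
Clearing the common denominator, the matrix is `k • L` with
`k = 4ABC / ((A+B)(A+C)(B+C)(A+B+C)) > 0` and `L` the Laplacian of the triangle whose edge
`{1,2}` has weight `C`, `{1,3}` weight `B` and `{2,3}` weight `A`. A graph Laplacian with
nonnegative weights is positive semidefinite, since `2 xᵀ L x = ∑ᵢⱼ wᵢⱼ (xᵢ - xⱼ)²`.
-/

open Matrix Finset

section WeightedLaplacian

variable {n : Type*} [Fintype n] [DecidableEq n]

def weightedLaplacian (w : Matrix n n ℝ) : Matrix n n ℝ :=
  diagonal (fun i => ∑ j, w i j) - w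

theorem dotProduct_weightedLaplacian_mulVec (w : Matrix n n ℝ) (x : n → ℝ) :
    x ⬝ᵥ (weightedLaplacian w *ᵥ x) = ∑ i, ∑ j, w i j * (x i ^ 2 - x i * x j) := by
  rw [weightedLaplacian, sub_mulVec, dotProduct_sub]
  simp only [dotProduct, mulVec_diagonal]
  simp only [mulVec, dotProduct, Finset.mul_sum, Finset.sum_mul, ← Finset.sum_sub_distrib]
  exact sum_congr rfl fun i _ => sum_congr rfl fun j _ => by ring

theorem two_mul_dotProduct_weightedLaplacian_mulVec {w : Matrix n n ℝ} (hw : w.IsSymm)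
    (x : n → ℝ) :
    2 * (x ⬝ᵥ (weightedLaplacian w *ᵥ x)) = ∑ i, ∑ j, w i j * (x i - x j) ^ 2 := by
  have hswap : ∑ i, ∑ j, w i j * (x j ^ 2 - x j * x i) =
      ∑ i, ∑ j, w i j * (x i ^ 2 - x i * x j) := by
    rw [Finset.sum_comm]
    simp only [hw.apply]
  rw [two_mul, dotProduct_weightedLaplacian_mulVec]
  nth_rw 2 [← hswap]
  simp only [← Finset.sum_add_distrib]
  exact sum_congr rfl fun i _ => sum_congr rfl fun j _ => by ring

theorem posSemidef_weightedLaplacian {w : Matrix n n ℝ} (hw : w.IsSymm)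
    (hw_nonneg : ∀ i j, 0 ≤ w i j) : (weightedLaplacian w).PosSemidef := by
  refine .of_dotProduct_mulVec_nonneg ?_ fun x => ?_
  · simp [weightedLaplacian, IsHermitian, hw.eq]
  · have hsum : 0 ≤ ∑ i, ∑ j, w i j * (x i - x j) ^ 2 :=
      sum_nonneg fun i _ => sum_nonneg fun j _ => mul_nonneg (hw_nonneg i j) (sq_nonneg _)
    rw [star_trivial]
    linarith [two_mul_dotProduct_weightedLaplacian_mulVec hw x]

end WeightedLaplacian

theorem posSemidef_weightedLaplacian_triangle {a b c : ℝ} (ha : 0 ≤ a) (hb : 0 ≤ b)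
    (hc : 0 ≤ c) : (weightedLaplacian !![0, c, b; c, 0, a; b, a, 0]).PosSemidef := by
  refine posSemidef_weightedLaplacian ?_ fun i j => ?_
  · ext i j
    fin_cases i <;> fin_cases j <;> rfl
  · fin_cases i <;> fin_cases j <;> simp [ha, hb, hc]

/-- the 3×3 matrix H is positive semidefinite. -/
theorem stmt_5 (A B C : ℝ) (hA : 0 < A) (hB : 0 < B) (hC : 0 < C) :
    (Matrix.of
      !![4 * A * B * C / ((A + B) * (A + C) * (A + B + C)),
         -(4 * A * B * C ^ 2) / ((A + B) * (A + C) * (B + C) * (A + B + C)),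
         -(4 * A * B ^ 2 * C) / ((A + B) * (A + C) * (B + C) * (A + B + C));
         -(4 * A * B * C ^ 2) / ((A + B) * (A + C) * (B + C) * (A + B + C)),
         4 * A * B * C / ((A + B) * (B + C) * (A + B + C)),
         -(4 * A ^ 2 * B * C) / ((A + B) * (A + C) * (B + C) * (A + B + C));
         -(4 * A * B ^ 2 * C) / ((A + B) * (A + C) * (B + C) * (A + B + C)),
         -(4 * A ^ 2 * B * C) / ((A + B) * (A + C) * (B + C) * (A + B + C)),
         4 * A * B * C / ((A + C) * (B + C) * (A + B + C))]).PosSemidef := by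
  have hk : 0 ≤ 4 * A * B * C / ((A + B) * (A + C) * (B + C) * (A + B + C)) := by positivity
  convert (posSemidef_weightedLaplacian_triangle hA.le hB.le hC.le).smul hk using 1
  ext i j
  -- `Matrix.of` is applied to a matrix rather than to a function, which `rw` does not see through
  erw [of_apply]
  fin_cases i <;> fin_cases j <;>
    simp [weightedLaplacian, Fin.sum_univ_three] <;> field_simp <;> ring
end

section
/- In the Plackett-Luce model with weights w ∈ ℝⁿ (n ≥ 2), the probability that item u is ranked before item v equals e^{w(u)}/(e^{w(u)} + e^{w(v)}), for any distinct u, v. -/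
/-!
Write a ranking as the list of items in order of selection. Conditioning on the first item
`a` out of a set `s` (chosen with probability `e^{w a} / S`, `S = ∑_{j ∈ s} e^{w j}`), `u`
precedes `v` for sure if `a = u`, never if `a = v`, and otherwise with the same probability
`R = e^{w u} / (e^{w u} + e^{w v})` for the remaining items, by induction on `s`. Hence the
probability is `(e^{w u} + R ∑_{a ≠ u, v} e^{w a}) / S = R`, since
`e^{w u} = R (e^{w u} + e^{w v})`.
-/

open Finset

/-- Probability that the Plackett-Luce model with weights `w` produces the ranking `π`
(`π v` is the position of item `v`, smaller means earlier): items are chosen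
sequentially, each time with probability proportional to `exp (w item)` among the
remaining items. -/
noncomputable def PLprob {n : ℕ} (w : Fin n → ℝ) (π : Equiv.Perm (Fin n)) : ℝ :=
  ∏ k : Fin n,
    Real.exp (w (π.symm k)) / ∑ j ∈ univ.filter (fun j => k ≤ π j), Real.exp (w j)

section Orderings

variable {α : Type*} [DecidableEq α]

noncomputable def orderings (s : Finset α) : Finset (List α) :=
  s.toList.permutations.toFinset

theorem mem_orderings {s : Finset α} {l : List α} :
    l ∈ orderings s ↔ l.Nodup ∧ l.toFinset = s := by
  rw [orderings, List.mem_toFinset, List.mem_permutations]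
  refine ⟨fun h => ⟨h.nodup_iff.mpr s.nodup_toList, by ext; simp [h.mem_iff]⟩, ?_⟩
  rintro ⟨hl, rfl⟩
  exact List.perm_of_nodup_nodup_toFinset_eq hl (Finset.nodup_toList _) (by simp)

theorem orderings_empty : orderings (∅ : Finset α) = {[]} := by
  ext l
  simp only [mem_orderings, List.toFinset_eq_empty_iff, mem_singleton]
  exact ⟨And.right, fun h => ⟨h ▸ List.nodup_nil, h⟩⟩

theorem cons_mem_orderings {s : Finset α} {a : α} {t : List α} :
    a :: t ∈ orderings s ↔ a ∈ s ∧ t ∈ orderings (s.erase a) := by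
  simp only [mem_orderings, List.nodup_cons, List.toFinset_cons]
  constructor
  · rintro ⟨⟨hat, ht⟩, rfl⟩
    exact ⟨mem_insert_self _ _, ht, by simp [hat]⟩
  · rintro ⟨ha, ht, hts⟩
    have hat : a ∉ t := fun h => by simpa [hts] using List.mem_toFinset.mpr h
    exact ⟨⟨hat, ht⟩, by rw [hts, insert_erase ha]⟩

theorem sum_orderings_eq_sum_sum_cons {M : Type*} [AddCommMonoid M] {s : Finset α}
    (hs : s.Nonempty) (F : List α → M) :
    ∑ l ∈ orderings s, F l = ∑ a ∈ s, ∑ t ∈ orderings (s.erase a), F (a :: t) := by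
  rw [sum_sigma']
  symm
  refine sum_bij (fun p _ => p.1 :: p.2) (fun p hp => cons_mem_orderings.mpr (mem_sigma.mp hp))
    (fun p _ q _ h => by simpa [Sigma.ext_iff] using h) (fun l hl => ?_) (fun _ _ => rfl)
  obtain ⟨a, t, rfl⟩ := List.exists_cons_of_ne_nil (l := l) fun h => by
    simp [h, mem_orderings, eq_comm, hs.ne_empty] at hl
  exact ⟨⟨a, t⟩, mem_sigma.mpr (cons_mem_orderings.mp hl), rfl⟩

end Orderings

section PlackettLuce

variable {α : Type*} [DecidableEq α] (w : α → ℝ)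

noncomputable def plackettLuceList : List α → ℝ
  | [] => 1
  | a :: t =>
    Real.exp (w a) / (∑ j ∈ (a :: t).toFinset, Real.exp (w j)) * plackettLuceList t

theorem plackettLuceList_cons_of_mem_orderings {s : Finset α} {a : α} {t : List α}
    (ht : a :: t ∈ orderings s) :
    plackettLuceList w (a :: t) =
      Real.exp (w a) / (∑ j ∈ s, Real.exp (w j)) * plackettLuceList w t := by
  rw [plackettLuceList, (mem_orderings.mp ht).2]

theorem sum_plackettLuceList_orderings (s : Finset α) :
    ∑ l ∈ orderings s, plackettLuceList w l = 1 := by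
  induction s using Finset.strongInduction with | _ s ih
  rcases s.eq_empty_or_nonempty with rfl | hs
  · simp [orderings_empty, plackettLuceList]
  set S := ∑ j ∈ s, Real.exp (w j)
  have hS : S ≠ 0 := (sum_pos (fun j _ => Real.exp_pos _) hs).ne'
  calc ∑ l ∈ orderings s, plackettLuceList w l
      = ∑ a ∈ s, Real.exp (w a) / S *
          ∑ t ∈ orderings (s.erase a), plackettLuceList w t := by
        rw [sum_orderings_eq_sum_sum_cons hs]
        refine sum_congr rfl fun a ha => ?_
        rw [mul_sum]
        exact sum_congr rfl fun t ht =>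
          plackettLuceList_cons_of_mem_orderings w (cons_mem_orderings.mpr ⟨ha, ht⟩)
    _ = 1 := by
        rw [← div_self hS, sum_div]
        exact sum_congr rfl fun a ha => by rw [ih _ (erase_ssubset ha), mul_one]

theorem sum_plackettLuceList_orderings_idxOf_lt {s : Finset α} {u v : α} (hu : u ∈ s)
    (hv : v ∈ s) (huv : u ≠ v) :
    ∑ l ∈ orderings s with l.idxOf u < l.idxOf v, plackettLuceList w l
      = Real.exp (w u) / (Real.exp (w u) + Real.exp (w v)) := by
  induction s using Finset.strongInduction with | _ s ih
  set R := Real.exp (w u) / (Real.exp (w u) + Real.exp (w v))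
  have hs : s.Nonempty := ⟨u, hu⟩
  set S := ∑ j ∈ s, Real.exp (w j)
  have hS : S ≠ 0 := (sum_pos (fun j _ => Real.exp_pos _) hs).ne'
  -- `g a` is the conditional probability that `u` precedes `v` given that `a` comes first
  let g a := if a = u then 1 else if a = v then 0 else R
  have hhead : ∀ a ∈ s, ∑ t ∈ orderings (s.erase a),
      (if (a :: t).idxOf u < (a :: t).idxOf v then plackettLuceList w (a :: t) else 0)
        = Real.exp (w a) / S * g a := by
    intro a ha
    rw [sum_congr rfl fun t ht => by
      rw [plackettLuceList_cons_of_mem_orderings w (cons_mem_orderings.mpr ⟨ha, ht⟩),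
        ← mul_ite_zero], ← mul_sum]
    congr 1
    rcases eq_or_ne a u with rfl | hau
    · simp [g, List.idxOf_cons_ne _ huv, sum_plackettLuceList_orderings]
    rcases eq_or_ne a v with rfl | hav
    · simp [g, hau]
    simp only [g, List.idxOf_cons_ne _ hau, List.idxOf_cons_ne _ hav, Nat.succ_lt_succ_iff,
      if_neg hau, if_neg hav]
    rw [← sum_filter]
    exact ih _ (erase_ssubset ha) (mem_erase.mpr ⟨hau.symm, hu⟩)
      (mem_erase.mpr ⟨hav.symm, hv⟩)
  have hR : Real.exp (w u) * (1 - R) + Real.exp (w v) * (0 - R) = 0 := by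
    have : Real.exp (w u) + Real.exp (w v) ≠ 0 := by positivity
    simp only [R]
    field_simp
    ring
  have hg : ∑ a ∈ s, Real.exp (w a) * (g a - R) = 0 := by
    rw [sum_eq_add_of_mem u v hu hv huv fun c _ hc => by simp [g, hc.1, hc.2]]
    simpa [g, huv.symm] using hR
  rw [sum_filter, sum_orderings_eq_sum_sum_cons hs, sum_congr rfl hhead]
  calc ∑ a ∈ s, Real.exp (w a) / S * g a
      = (∑ a ∈ s, Real.exp (w a) * R + ∑ a ∈ s, Real.exp (w a) * (g a - R)) / S := by
        rw [← sum_add_distrib, sum_div]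
        exact sum_congr rfl fun a _ => by ring
    _ = R := by rw [hg, ← sum_mul, add_zero, mul_div_right_comm, div_self hS, one_mul]

theorem plackettLuceList_eq_prod : ∀ l : List α,
    plackettLuceList w l = ∏ k : Fin l.length,
      Real.exp (w l[k]) / ∑ j ∈ (l.drop k).toFinset, Real.exp (w j)
  | [] => rfl
  | a :: t => by
    rw [plackettLuceList, plackettLuceList_eq_prod t]
    exact (Fin.prod_univ_succ (n := t.length) fun k =>
      Real.exp (w (a :: t)[k]) / ∑ j ∈ ((a :: t).drop k).toFinset, Real.exp (w j)).symm

end PlackettLuce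

section Permutations

variable {n : ℕ}

theorem idxOf_ofFn_symm (π : Equiv.Perm (Fin n)) (u : Fin n) :
    (List.ofFn π.symm).idxOf u = π u := by
  simpa using (List.nodup_ofFn.mpr π.symm.injective).idxOf_getElem (π u) (by simp)

theorem toFinset_drop_ofFn_symm (π : Equiv.Perm (Fin n)) (k : ℕ) :
    ((List.ofFn π.symm).drop k).toFinset = univ.filter (fun j => k ≤ π j) := by
  ext j
  simp only [List.mem_toFinset, List.mem_drop_iff_getElem, List.getElem_ofFn, List.length_ofFn,
    mem_filter, mem_univ, true_and]
  constructor
  · rintro ⟨i, hi, rfl⟩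
    simp
  · intro hk
    refine ⟨π j - k, by omega, ?_⟩
    rw [π.symm_apply_eq]
    ext
    simp only
    omega

theorem plackettLuceList_ofFn_symm (w : Fin n → ℝ) (π : Equiv.Perm (Fin n)) :
    plackettLuceList w (List.ofFn π.symm) = PLprob w π := by
  rw [plackettLuceList_eq_prod, PLprob]
  refine Fintype.prod_equiv (finCongr List.length_ofFn) _ _ fun k => ?_
  simp only [Fin.getElem_fin, List.getElem_ofFn, toFinset_drop_ofFn_symm, finCongr_apply,
    Fin.le_def, Fin.val_cast]
  rfl

theorem sum_perm_eq_sum_orderings {M : Type*} [AddCommMonoid M] (F : List (Fin n) → M) :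
    ∑ π : Equiv.Perm (Fin n), F (List.ofFn π.symm) = ∑ l ∈ orderings univ, F l := by
  refine sum_bij (fun π _ => List.ofFn π.symm) (fun π _ => ?_)
    (fun π _ σ _ h => inv_injective (Equiv.coe_fn_injective (List.ofFn_injective h)))
    (fun l hl => ?_) (fun _ _ => rfl)
  · exact mem_orderings.mpr
      ⟨List.nodup_ofFn.mpr π.symm.injective, by ext; simpa using π.symm.surjective _⟩
  obtain ⟨hl, hls⟩ := mem_orderings.mp hl
  have hmem (i : Fin n) : i ∈ l := by simp [← List.mem_toFinset, hls]
  have hlen : l.length = n := by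
    simpa [List.toFinset_card_of_nodup hl] using congrArg card hls
  refine ⟨((finCongr hlen).symm.trans (hl.getEquivOfForallMemList l hmem)).symm, mem_univ _, ?_⟩
  conv_rhs => rw [← List.ofFn_get l, List.ofFn_congr hlen]
  rfl

end Permutations

/-- under Plackett-Luce, P(u ranked before v) = e^{w u}/(e^{w u}+e^{w v}). -/
theorem stmt_8 (n : ℕ) (w : Fin n → ℝ) (u v : Fin n) (huv : u ≠ v) :
    ∑ π ∈ univ.filter (fun π : Equiv.Perm (Fin n) => π u < π v), PLprob w π
      = Real.exp (w u) / (Real.exp (w u) + Real.exp (w v)) := by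
  calc ∑ π ∈ univ.filter (fun π : Equiv.Perm (Fin n) => π u < π v), PLprob w π
      = ∑ π : Equiv.Perm (Fin n), if (List.ofFn π.symm).idxOf u < (List.ofFn π.symm).idxOf v
          then plackettLuceList w (List.ofFn π.symm) else 0 := by
        simp only [sum_filter, idxOf_ofFn_symm, plackettLuceList_ofFn_symm, Fin.val_fin_lt]
    _ = ∑ l ∈ orderings univ with l.idxOf u < l.idxOf v, plackettLuceList w l := by
        rw [sum_filter]
        exact sum_perm_eq_sum_orderings fun l =>
          if l.idxOf u < l.idxOf v then plackettLuceList w l else 0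
    _ = Real.exp (w u) / (Real.exp (w u) + Real.exp (w v)) :=
        sum_plackettLuceList_orderings_idxOf_lt w (mem_univ u) (mem_univ v) huv
end

section
/- In the Plackett-Luce model with weights w ∈ ℝⁿ, for any two disjoint pairs of distinct elements (u,v) and (u',v') with {u,v} ∩ {u',v'} = ∅, the events {u ranked before v} and {u' ranked before v'} are statistically independent: P(u ≺ v ∧ u' ≺ v') = P(u ≺ v)·P(u' ≺ v'). -/
open Finset

/-!
Condition on the item ranked first: if it is `p`, the rest of the ranking is again
Plackett-Luce on the remaining items. By induction on `n`, for any family of pairwise disjoint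
pairs the probability that `u i` precedes `v i` for every `i` is
`∏ i, e^{w (u i)} / (e^{w (u i)} + e^{w (v i)})`: a first item `p = v i` kills the event,
`p = u i` settles pair `i`, and any other `p` leaves all pairs open. Weighted by
`e^{w p} / ∑ e^w`, the contributions of `p = u i` and `p = v i` add up to what they would be
if both left every pair open, which closes the induction. Independence is the case of two
pairs compared with the case of one.
-/

open Equiv Function

namespace PlackettLuce

variable {n : ℕ}

/-- Enumerates the items other than `p`, in the labelling used by `Perm.decomposeFin`. -/
def succSwap (p : Fin (n + 1)) (a : Fin n) : Fin (n + 1) := swap 0 p a.succ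

lemma exists_succSwap_eq {p x : Fin (n + 1)} (hx : x ≠ p) : ∃ a, succSwap p a = x := by
  have h : swap 0 p x ≠ 0 := by
    rwa [Ne, swap_apply_eq_iff, swap_apply_left]
  exact ⟨(swap 0 p x).pred h, by rw [succSwap, Fin.succ_pred, swap_apply_self]⟩

lemma sum_univ_eq_add_sum_succSwap {M : Type*} [AddCommMonoid M] (p : Fin (n + 1))
    (g : Fin (n + 1) → M) : ∑ j, g j = g p + ∑ a, g (succSwap p a) := by
  rw [← Equiv.sum_comp (swap 0 p) g, Fin.sum_univ_succ, swap_apply_left]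
  rfl

/-- The ranking that puts `p` first and then ranks `succSwap p a` as `π` ranks `a`. -/
def consRank : Fin (n + 1) × Perm (Fin n) ≃ Perm (Fin (n + 1)) :=
  ((prodCongr (Equiv.refl _) (Equiv.inv _)).trans Perm.decomposeFin.symm).trans (Equiv.inv _)

lemma consRank_apply_self (p : Fin (n + 1)) (π : Perm (Fin n)) : consRank (p, π) p = 0 := by
  simp [consRank, symm_apply_eq]

lemma consRank_apply_succSwap (p : Fin (n + 1)) (π : Perm (Fin n)) (a : Fin n) :
    consRank (p, π) (succSwap p a) = (π a).succ := by
  simp [consRank, succSwap, symm_apply_eq]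

lemma consRank_symm_zero (p : Fin (n + 1)) (π : Perm (Fin n)) :
    (consRank (p, π)).symm 0 = p := by
  rw [symm_apply_eq, consRank_apply_self]

lemma consRank_symm_succ (p : Fin (n + 1)) (π : Perm (Fin n)) (i : Fin n) :
    (consRank (p, π)).symm i.succ = succSwap p (π.symm i) := by
  rw [symm_apply_eq, consRank_apply_succSwap, apply_symm_apply]

lemma sum_filter_succ_le_consRank {M : Type*} [AddCommMonoid M] (g : Fin (n + 1) → M)
    (p : Fin (n + 1)) (π : Perm (Fin n)) (i : Fin n) :
    ∑ j ∈ univ.filter (fun j => i.succ ≤ consRank (p, π) j), g j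
      = ∑ a ∈ univ.filter (fun a => i ≤ π a), g (succSwap p a) := by
  simp only [sum_filter]
  rw [sum_univ_eq_add_sum_succSwap p]
  simp [consRank_apply_self, consRank_apply_succSwap, Fin.succ_ne_zero]

lemma PLprob_consRank (w : Fin (n + 1) → ℝ) (p : Fin (n + 1)) (π : Perm (Fin n)) :
    PLprob w (consRank (p, π))
      = (Real.exp (w p) / ∑ j, Real.exp (w j)) * PLprob (fun a => w (succSwap p a)) π := by
  rw [PLprob, Fin.prod_univ_succ, consRank_symm_zero]
  simp only [Fin.zero_le, filter_true, consRank_symm_succ, sum_filter_succ_le_consRank]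
  rfl

lemma sum_filter_PLprob_eq_sum_consRank (w : Fin (n + 1) → ℝ) (P : Perm (Fin (n + 1)) → Prop)
    [DecidablePred P] :
    ∑ π ∈ univ.filter P, PLprob w π
      = ∑ p, (Real.exp (w p) / ∑ j, Real.exp (w j)) *
          ∑ π ∈ univ.filter (fun π => P (consRank (p, π))),
            PLprob (fun a => w (succSwap p a)) π := by
  rw [sum_filter, ← consRank.sum_comp, Fintype.sum_prod_type]
  refine sum_congr rfl fun p _ => ?_
  rw [mul_sum, sum_filter]
  refine sum_congr rfl fun π _ => ?_
  split_ifs <;> simp [PLprob_consRank]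

lemma sum_mul_ite_prod_pairs {α ι : Type*} [Fintype α] [DecidableEq α] [Fintype ι]
    [DecidableEq ι] (e : α → ℝ) (u v : ι → α) (huv : Injective (Sum.elim u v))
    (he : ∀ i, e (u i) + e (v i) ≠ 0) :
    ∑ p, e p * (if p ∈ Set.range v then 0
      else ∏ i ∈ univ.filter (fun i => u i ≠ p), e (u i) / (e (u i) + e (v i)))
      = (∑ p, e p) * ∏ i, e (u i) / (e (u i) + e (v i)) := by
  set r : ι → ℝ := fun i => e (u i) / (e (u i) + e (v i))
  set f : α → ℝ := fun p =>
    if p ∈ Set.range v then 0 else ∏ i ∈ univ.filter (u · ≠ p), r i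
  change ∑ p, e p * f p = (∑ p, e p) * ∏ i, r i
  have hu : Injective u := huv.comp Sum.inl_injective
  have hf_inl (i : ι) : f (u i) = ∏ j ∈ univ.erase i, r j := by
    have hi : u i ∉ Set.range v := by rintro ⟨j, hj⟩; exact Sum.inr_ne_inl (huv hj)
    simp only [f, if_neg hi]
    congr 1
    ext j; simp [hu.eq_iff]
  have hf_inr (i : ι) : f (v i) = 0 := if_pos ⟨i, rfl⟩
  have hf_off (p : α) (hp : p ∉ Set.range (Sum.elim u v)) : f p = ∏ i, r i := by
    simp only [Set.mem_range, Sum.exists, Sum.elim_inl, Sum.elim_inr, not_or, not_exists] at hp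
    simp only [f, Set.mem_range, not_exists.mpr hp.2, if_false]
    congr 1
    exact filter_true_of_mem fun i _ => hp.1 i
  have hpair (i : ι) :
      e (u i) * f (u i) + e (v i) * f (v i) = (e (u i) + e (v i)) * ∏ j, r j := by
    have hr : (e (u i) + e (v i)) * r i = e (u i) := mul_div_cancel₀ _ (he i)
    rw [hf_inl, hf_inr, ← mul_prod_erase univ r (mem_univ i), ← mul_assoc, hr, mul_zero,
      add_zero]
  rw [← sub_eq_zero, sum_mul, ← sum_sub_distrib, ← Fintype.sum_of_injective (Sum.elim u v) huv
    (fun x => e (Sum.elim u v x) * f (Sum.elim u v x) - e (Sum.elim u v x) * ∏ i, r i) _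
    (fun p hp => by rw [hf_off p hp, sub_self]) (fun _ => rfl), Fintype.sum_sum_type,
    ← sum_add_distrib]
  refine sum_eq_zero fun i _ => ?_
  simp only [Sum.elim_inl, Sum.elim_inr]
  linarith [hpair i]

section Pairs

variable {ι : Type*} {u v : ι → Fin (n + 1)}

lemma not_forall_consRank_lt_of_mem_range {p : Fin (n + 1)} (hp : p ∈ Set.range v)
    (π : Perm (Fin n)) : ¬ ∀ i, consRank (p, π) (u i) < consRank (p, π) (v i) := by
  obtain ⟨j, rfl⟩ := hp
  intro h
  exact Fin.not_lt_zero _ (consRank_apply_self (v j) π ▸ h j)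

lemma forall_consRank_lt_iff {p : Fin (n + 1)} {a : {i // u i ≠ p} → Fin n} {b : ι → Fin n}
    (ha : ∀ i, succSwap p (a i) = u i) (hb : ∀ i, succSwap p (b i) = v i) (π : Perm (Fin n)) :
    (∀ i, consRank (p, π) (u i) < consRank (p, π) (v i)) ↔ ∀ i, π (a i) < π (b i) := by
  refine ⟨fun h i => ?_, fun h i => ?_⟩
  · simpa only [← ha, ← hb, consRank_apply_succSwap, Fin.succ_lt_succ_iff] using h i
  · rw [← hb, consRank_apply_succSwap]
    by_cases hi : u i = p
    · rw [hi, consRank_apply_self]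
      exact Fin.succ_pos _
    · simpa only [← ha ⟨i, hi⟩, consRank_apply_succSwap, Fin.succ_lt_succ_iff]
        using h ⟨i, hi⟩

end Pairs

theorem sum_PLprob_forall_lt {ι : Type*} [Fintype ι] (w : Fin n → ℝ) (u v : ι → Fin n)
    (huv : Injective (Sum.elim u v)) :
    ∑ π ∈ univ.filter (fun π : Perm (Fin n) => ∀ i, π (u i) < π (v i)), PLprob w π
      = ∏ i, Real.exp (w (u i)) / (Real.exp (w (u i)) + Real.exp (w (v i))) := by
  induction n generalizing ι with
  | zero =>
    have : IsEmpty ι := ⟨fun i => (u i).elim0⟩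
    simp [PLprob]
  | succ n ih =>
    classical
    have hinner (p : Fin (n + 1)) :
        ∑ π ∈ univ.filter (fun π => ∀ i, consRank (p, π) (u i) < consRank (p, π) (v i)),
            PLprob (fun a => w (succSwap p a)) π
          = if p ∈ Set.range v then 0 else ∏ i ∈ univ.filter (u · ≠ p),
              Real.exp (w (u i)) / (Real.exp (w (u i)) + Real.exp (w (v i))) := by
      split_ifs with hp
      · exact sum_eq_zero fun π hπ => absurd (mem_filter.mp hπ).2
          (not_forall_consRank_lt_of_mem_range hp π)
      choose b hb using fun i => exists_succSwap_eq fun h : v i = p => hp ⟨i, h⟩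
      choose a ha using fun i : {i // u i ≠ p} => exists_succSwap_eq i.2
      have hab : Injective (Sum.elim a fun i : {i // u i ≠ p} => b i) := by
        have hcomp : succSwap p ∘ Sum.elim a (fun i : {i // u i ≠ p} => b i)
            = Sum.elim u v ∘ Sum.map (↑) (↑) := by
          ext (i | i) <;> simp [ha, hb]
        refine Injective.of_comp (f := succSwap p) ?_
        rw [hcomp]
        exact huv.comp (Sum.map_injective.2 ⟨Subtype.val_injective, Subtype.val_injective⟩)
      rw [filter_congr fun π _ => forall_consRank_lt_iff ha hb π, ih _ a _ hab]
      simp only [ha, hb]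
      exact (prod_subtype (univ.filter (u · ≠ p)) (fun i => by simp)
        fun i => Real.exp (w (u i)) / (Real.exp (w (u i)) + Real.exp (w (v i)))).symm
    have hS : (∑ j, Real.exp (w j)) ≠ 0 :=
      (sum_pos (fun j _ => Real.exp_pos (w j)) univ_nonempty).ne'
    simp_rw [sum_filter_PLprob_eq_sum_consRank, hinner, div_mul_eq_mul_div, ← sum_div]
    rw [sum_mul_ite_prod_pairs (fun j => Real.exp (w j)) u v huv (fun i => by positivity),
      mul_div_cancel_left₀ _ hS]

theorem sum_PLprob_lt (w : Fin n → ℝ) {u v : Fin n} (huv : u ≠ v) :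
    ∑ π ∈ univ.filter (fun π : Perm (Fin n) => π u < π v), PLprob w π
      = Real.exp (w u) / (Real.exp (w u) + Real.exp (w v)) := by
  have hpair : Injective (Sum.elim (fun _ : Unit => u) fun _ : Unit => v) := by
    rintro (_ | _) (_ | _) h <;> simp_all [eq_comm]
  simpa using sum_PLprob_forall_lt w _ _ hpair

end PlackettLuce

open PlackettLuce in
/-- for disjoint pairs (u,v), (u',v'), the events {u ≺ v} and
{u' ≺ v'} are independent under Plackett-Luce. -/
theorem stmt_11 (n : ℕ) (w : Fin n → ℝ) (u v u' v' : Fin n)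
    (huv : u ≠ v) (hu'v' : u' ≠ v')
    (hdisj : ({u, v} : Set (Fin n)) ∩ {u', v'} = ∅) :
    ∑ π ∈ univ.filter (fun π : Equiv.Perm (Fin n) => π u < π v ∧ π u' < π v'),
        PLprob w π
      = (∑ π ∈ univ.filter (fun π : Equiv.Perm (Fin n) => π u < π v), PLprob w π)
        * (∑ π ∈ univ.filter (fun π : Equiv.Perm (Fin n) => π u' < π v'), PLprob w π) := by
  rw [← Set.disjoint_iff_inter_eq_empty] at hdisj
  simp only [Set.disjoint_insert_left, Set.disjoint_singleton_left, Set.mem_insert_iff,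
    Set.mem_singleton_iff, not_or] at hdisj
  have hpairs : Function.Injective (Sum.elim ![u, u'] ![v, v']) := by
    rintro (i | i) (j | j) h <;> fin_cases i <;> fin_cases j <;> simp_all [eq_comm]
  rw [sum_PLprob_lt w huv, sum_PLprob_lt w hu'v']
  simpa only [Fin.forall_fin_two, Fin.prod_univ_two, Matrix.cons_val_zero, Matrix.cons_val_one]
    using sum_PLprob_forall_lt w ![u, u'] ![v, v'] hpairs
end
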